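/- Suppose X, Y : [0,T] → ℝ^{n×n} are C¹ and satisfy X'(t) = A X(t) − 2σσᵀ Y(t), Y'(t) = −Q X(t) − Aᵀ Y(t) for all t ∈ [0,T] with X(T) = I and Y(T) = C₁, and suppose X(t) is invertible for every t ∈ [0,T]; set U(t) := Y(t)X(t)⁻¹. Let B ∈ ℝⁿ, let Ψ, θ ∈ ℝ^{1×n} be row vectors. Then R₁(t) := (θ − ∫_t^T (2BᵀY(s) + ΨX(s)) ds) · X(t)⁻¹ is a C¹ row-vector-valued function satisfying R₁'(t) + R₁(t)(A − 2σσᵀU(t)) − 2BᵀU(t) − Ψ = 0 for all t ∈ [0,T] and R₁(T) = θ. -/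

import Mathlib

/-!
Write `R₁ = G X⁻¹` with `G t = θ - ∫_t^T F`, `F = 2BᵀY + ΨX`. By the fundamental theorem of
calculus `G' = F`, and `(X⁻¹)' = -X⁻¹ X' X⁻¹`; both factors are `C¹`, hence so is `R₁`.
By the product rule `R₁' = F X⁻¹ - R₁ (X' X⁻¹)`, and the equation for `X'` together with
`Y X⁻¹ = U` turns this into `R₁' = 2BᵀU + Ψ - R₁ (A - 2σσᵀU)`. At `t = T` the integral
vanishes and `X T = 1`.
-/

open Matrix Set

attribute [local instance] Matrix.normedAddCommGroup Matrix.normedSpace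

theorem ContinuousOn.matrix_mul {α R l m p : Type*} [TopologicalSpace α] [TopologicalSpace R]
    [Fintype m] [Mul R] [AddCommMonoid R] [ContinuousAdd R] [ContinuousMul R]
    {f : α → Matrix l m R} {g : α → Matrix m p R} {s : Set α}
    (hf : ContinuousOn f s) (hg : ContinuousOn g s) :
    ContinuousOn (fun u => f u * g u) s := by
  rw [continuousOn_iff_continuous_domRestrict] at *
  exact hf.matrix_mul hg

section MatrixCalculus

variable {l m p : Type*} [Fintype l] [Fintype m] [Fintype p]

noncomputable def Matrix.mulCLM : Matrix l m ℝ →L[ℝ] Matrix m p ℝ →L[ℝ] Matrix l p ℝ :=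
  LinearMap.toContinuousLinearMap
    (LinearMap.toContinuousLinearMap.toLinearMap ∘ₗ mulLinearMap ℝ)

theorem HasDerivWithinAt.matrix_mul {f : ℝ → Matrix l m ℝ} {g : ℝ → Matrix m p ℝ}
    {f' : Matrix l m ℝ} {g' : Matrix m p ℝ} {s : Set ℝ} {t : ℝ}
    (hf : HasDerivWithinAt f f' s t) (hg : HasDerivWithinAt g g' s t) :
    HasDerivWithinAt (fun u => f u * g u) (f' * g t + f t * g') s t := by
  rw [add_comm]
  exact mulCLM.hasDerivWithinAt_of_bilinear hf hg

theorem ContDiffOn.matrix_mul {k : WithTop ℕ∞} {f : ℝ → Matrix l m ℝ} {g : ℝ → Matrix m p ℝ}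
    {s : Set ℝ} (hf : ContDiffOn ℝ k f s) (hg : ContDiffOn ℝ k g s) :
    ContDiffOn ℝ k (fun u => f u * g u) s :=
  (mulCLM.isBoundedBilinearMap.contDiff.comp_contDiffOn (hf.prodMk hg) :)

end MatrixCalculus

theorem contDiffOn_one_of_hasDerivWithinAt {E : Type*} [NormedAddCommGroup E] [NormedSpace ℝ E]
    {f f' : ℝ → E} {s : Set ℝ} (hs : UniqueDiffOn ℝ s)
    (hf : ∀ t ∈ s, HasDerivWithinAt f (f' t) s t) (hf' : ContinuousOn f' s) :
    ContDiffOn ℝ 1 f s :=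
  (contDiffOn_one_iff_derivWithin hs).2
    ⟨fun t ht => (hf t ht).differentiableWithinAt,
      hf'.congr fun t ht => (hf t ht).derivWithin (hs t ht)⟩

theorem hasDerivWithinAt_integral_Icc_left {E : Type*} [NormedAddCommGroup E] [NormedSpace ℝ E]
    [CompleteSpace E] {F : ℝ → E} {a b t : ℝ} (hF : ContinuousOn F (Icc a b)) (ht : t ∈ Icc a b) :
    HasDerivWithinAt (fun u => ∫ s in u..b, F s) (-F t) (Icc a b) t := by
  have hint : IntervalIntegrable F MeasureTheory.volume t b :=
    (hF.mono (by rw [uIcc_of_le ht.2]; exact Icc_subset_Icc ht.1 le_rfl)).intervalIntegrable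
  have : Fact (t ∈ Icc a b) := ⟨ht⟩
  exact intervalIntegral.integral_hasDerivWithinAt_left hint
    (hF.stronglyMeasurableAtFilter_nhdsWithin measurableSet_Icc t) (hF t ht)

section MatrixInverse

variable {m : Type*} [Fintype m] [DecidableEq m]

theorem HasDerivWithinAt.matrix_inv {X : ℝ → Matrix m m ℝ} {X' : Matrix m m ℝ} {s : Set ℝ}
    {t : ℝ} (hX : HasDerivWithinAt X X' s t) (h : IsUnit (X t)) :
    HasDerivWithinAt (fun u => (X u)⁻¹) (-((X t)⁻¹ * X' * (X t)⁻¹)) s t := by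
  obtain ⟨u, hu⟩ := h
  -- The `L∞` operator norm makes the matrices a complete normed algebra; it induces
  -- (definitionally) the same topology as the entrywise sup norm, which is all that
  -- `HasDerivWithinAt` depends on.
  let _ : NormedRing (Matrix m m ℝ) := Matrix.linftyOpNormedRing
  let _ : NormedAlgebra ℝ (Matrix m m ℝ) := Matrix.linftyOpNormedAlgebra
  have _ : HasSummableGeomSeries (Matrix m m ℝ) :=
    @instHasSummableGeomSeriesOfCompleteSpace _ _ (FiniteDimensional.complete ℝ _)
  have hinv := hasFDerivAt_ringInverse (𝕜 := ℝ) u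
  rw [hu] at hinv
  have hcomp := hinv.comp_hasDerivWithinAt t hX
  simp only [Function.comp_def, ← Matrix.nonsing_inv_eq_ringInverse] at hcomp
  rw [← hu, ← Matrix.coe_units_inv]
  exact hcomp

theorem ContDiffOn.matrix_inv {X : ℝ → Matrix m m ℝ} {s : Set ℝ} (hs : UniqueDiffOn ℝ s)
    (hX : ContDiffOn ℝ 1 X s) (h : ∀ t ∈ s, IsUnit (X t)) :
    ContDiffOn ℝ 1 (fun u => (X u)⁻¹) s := by
  have hX' : ∀ t ∈ s, HasDerivWithinAt X (derivWithin X s t) s t := fun t ht =>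
    (hX.differentiableOn one_ne_zero t ht).hasDerivWithinAt
  have hinv : ∀ t ∈ s, HasDerivWithinAt (fun u => (X u)⁻¹)
      (-((X t)⁻¹ * derivWithin X s t * (X t)⁻¹)) s t := fun t ht =>
    (hX' t ht).matrix_inv (h t ht)
  have hinv_cont : ContinuousOn (fun u => (X u)⁻¹) s := fun t ht =>
    (hinv t ht).continuousWithinAt
  have hderiv_cont : ContinuousOn (derivWithin X s) s :=
    ((contDiffOn_one_iff_derivWithin hs).1 hX).2
  exact contDiffOn_one_of_hasDerivWithinAt hs hinv
    ((hinv_cont.matrix_mul hderiv_cont).matrix_mul hinv_cont).neg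

end MatrixInverse

theorem statement10_general (n : ℕ) (T : ℝ) (hT : 0 < T)
    (A σ : Matrix (Fin n) (Fin n) ℝ)
    (X Y : ℝ → Matrix (Fin n) (Fin n) ℝ)
    (hXsmooth : ContDiffOn ℝ 1 X (Icc 0 T))
    (hYsmooth : ContDiffOn ℝ 1 Y (Icc 0 T))
    (hXode : ∀ t ∈ Icc 0 T,
      derivWithin X (Icc 0 T) t = A * X t - (2 : ℝ) • ((σ * σᵀ) * Y t))
    (hXT : X T = 1)
    (hXinv : ∀ t ∈ Icc 0 T, IsUnit (X t))
    (U : ℝ → Matrix (Fin n) (Fin n) ℝ)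
    (hU : ∀ t, U t = Y t * (X t)⁻¹)
    (B : Matrix (Fin n) (Fin 1) ℝ) (Ψ θ : Matrix (Fin 1) (Fin n) ℝ)
    (R₁ : ℝ → Matrix (Fin 1) (Fin n) ℝ)
    (hR₁ : ∀ t, R₁ t =
      (θ - ∫ s in t..T, ((2 : ℝ) • (Bᵀ * Y s) + Ψ * X s)) * (X t)⁻¹) :
    ContDiffOn ℝ 1 R₁ (Icc 0 T) ∧
    (∀ t ∈ Icc 0 T,
      derivWithin R₁ (Icc 0 T) t
        + R₁ t * (A - (2 : ℝ) • ((σ * σᵀ) * U t))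
        - (2 : ℝ) • (Bᵀ * U t) - Ψ = 0) ∧
    R₁ T = θ := by
  have hs : UniqueDiffOn ℝ (Icc 0 T) := uniqueDiffOn_Icc hT
  set F : ℝ → Matrix (Fin 1) (Fin n) ℝ := fun s => (2 : ℝ) • (Bᵀ * Y s) + Ψ * X s
  set G : ℝ → Matrix (Fin 1) (Fin n) ℝ := fun u => θ - ∫ s in u..T, F s
  have hR₁G : ∀ t, R₁ t = G t * (X t)⁻¹ := hR₁
  have hF : ContinuousOn F (Icc 0 T) :=
    ((contDiffOn_const.matrix_mul hYsmooth).const_smul (2 : ℝ)).add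
      (contDiffOn_const.matrix_mul hXsmooth) |>.continuousOn
  have hG : ∀ t ∈ Icc 0 T, HasDerivWithinAt G (F t) (Icc 0 T) t := fun t ht =>
    neg_neg (F t) ▸ (hasDerivWithinAt_integral_Icc_left hF ht).const_sub θ
  have hX : ∀ t ∈ Icc 0 T,
      HasDerivWithinAt X (A * X t - (2 : ℝ) • ((σ * σᵀ) * Y t)) (Icc 0 T) t := fun t ht =>
    hXode t ht ▸ (hXsmooth.differentiableOn one_ne_zero t ht).hasDerivWithinAt
  refine ⟨?_, fun t ht => ?_, by simp [hR₁, hXT]⟩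
  · rw [funext hR₁G]
    exact (contDiffOn_one_of_hasDerivWithinAt hs hG hF).matrix_mul
      (hXsmooth.matrix_inv hs hXinv)
  · have hdet : IsUnit (X t).det := (Matrix.isUnit_iff_isUnit_det _).mp (hXinv t ht)
    have hR₁' : derivWithin R₁ (Icc 0 T) t = F t * (X t)⁻¹
        + G t * -((X t)⁻¹ * (A * X t - (2 : ℝ) • ((σ * σᵀ) * Y t)) * (X t)⁻¹) :=
      funext hR₁G ▸
        ((hG t ht).matrix_mul ((hX t ht).matrix_inv (hXinv t ht))).derivWithin (hs t ht)
    have hFX : F t * (X t)⁻¹ = (2 : ℝ) • (Bᵀ * U t) + Ψ := by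
      simp only [F, hU, Matrix.add_mul, Matrix.smul_mul, Matrix.mul_assoc,
        Matrix.mul_nonsing_inv _ hdet, Matrix.mul_one]
    have hX'X : (A * X t - (2 : ℝ) • ((σ * σᵀ) * Y t)) * (X t)⁻¹
        = A - (2 : ℝ) • ((σ * σᵀ) * U t) := by
      simp only [hU, Matrix.sub_mul, Matrix.smul_mul, Matrix.mul_assoc,
        Matrix.mul_nonsing_inv _ hdet, Matrix.mul_one]
    have hGX' : G t * -((X t)⁻¹ * (A * X t - (2 : ℝ) • ((σ * σᵀ) * Y t)) * (X t)⁻¹)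
        = -(R₁ t * (A - (2 : ℝ) • ((σ * σᵀ) * U t))) := by
      rw [Matrix.mul_neg, Matrix.mul_assoc (X t)⁻¹, ← Matrix.mul_assoc, ← hR₁G, hX'X]
    rw [hR₁', hFX, hGX']
    abel

/-- With `X`, `Y` C¹ solutions of the linear terminal value system with
`X(t)` invertible on `[0,T]` and `U := Y X⁻¹`, the row vector function
`R₁(t) = (θ - ∫_t^T (2BᵀY(s) + ΨX(s)) ds) X(t)⁻¹` is C¹ and satisfies
`R₁' + R₁(A - 2σσᵀU) - 2BᵀU - Ψ = 0` with `R₁(T) = θ`. -/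
theorem statement10 (n : ℕ) (hn : 1 ≤ n) (T : ℝ) (hT : 0 < T)
    (A σ Υ Θ : Matrix (Fin n) (Fin n) ℝ)
    (Q C₁ : Matrix (Fin n) (Fin n) ℝ)
    (hQ : Q = (1 / 2 : ℝ) • (Υ + Υᵀ))
    (hC₁ : C₁ = -((1 / 2 : ℝ) • (Θ + Θᵀ)))
    (X Y : ℝ → Matrix (Fin n) (Fin n) ℝ)
    (hXsmooth : ContDiffOn ℝ 1 X (Icc 0 T))
    (hYsmooth : ContDiffOn ℝ 1 Y (Icc 0 T))
    (hXode : ∀ t ∈ Icc 0 T,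
      derivWithin X (Icc 0 T) t = A * X t - (2 : ℝ) • ((σ * σᵀ) * Y t))
    (hYode : ∀ t ∈ Icc 0 T,
      derivWithin Y (Icc 0 T) t = -(Q * X t) - Aᵀ * Y t)
    (hXT : X T = 1) (hYT : Y T = C₁)
    (hXinv : ∀ t ∈ Icc 0 T, IsUnit (X t))
    (U : ℝ → Matrix (Fin n) (Fin n) ℝ)
    (hU : ∀ t, U t = Y t * (X t)⁻¹)
    (B : Matrix (Fin n) (Fin 1) ℝ) (Ψ θ : Matrix (Fin 1) (Fin n) ℝ)
    (R₁ : ℝ → Matrix (Fin 1) (Fin n) ℝ)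
    (hR₁ : ∀ t, R₁ t =
      (θ - ∫ s in t..T, ((2 : ℝ) • (Bᵀ * Y s) + Ψ * X s)) * (X t)⁻¹) :
    ContDiffOn ℝ 1 R₁ (Icc 0 T) ∧
    (∀ t ∈ Icc 0 T,
      derivWithin R₁ (Icc 0 T) t
        + R₁ t * (A - (2 : ℝ) • ((σ * σᵀ) * U t))
        - (2 : ℝ) • (Bᵀ * U t) - Ψ = 0) ∧
    R₁ T = θ :=
  statement10_general n T hT A σ X Y hXsmooth hYsmooth hXode hXT hXinv U hU B Ψ θ R₁ hR₁
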